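/- arXiv:2008.01063 — 2 statements merged into one kernel-verified Lean document; each statement's English description precedes it below -/
import Mathlib

section
/- If $\psi : X \times X \to \mathbb{R}$ is a symmetric kernel of negative type (i.e., $\psi(x,x)=0$ and $\sum_{i,j} c_i c_j \psi(x_i,x_j) \le 0$ whenever $\sum_i c_i = 0$), then for every $t \ge 0$ the kernel $(x,y) \mapsto e^{-t\,\psi(x,y)}$ is positive semidefinite: for all finite families $x_1,\dots,x_n \in X$ and real $c_1,\dots,c_n$, $\sum_{i,j} c_i c_j e^{-t\psi(x_i,x_j)} \ge 0$. -/
/-!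
Fix a base point `x₀`. Negative type of `ψ` makes the kernel
`ψ(x, x₀) + ψ(y, x₀) - ψ(x, y)` is positive semidefinite. By the Schur product theorem its
entrywise powers are positive semidefinite, hence so is its entrywise exponential (a series with
nonnegative coefficients). Finally `exp (-t ψ(x, y))` is this exponential (scaled by `t`)
multiplied by `f(x) f(y)` with `f(x) = exp (-t ψ(x, x₀))`, and such a rescaling preserves
positive semidefiniteness.
-/

open Finset Matrix

namespace Matrix

variable {n : Type*} [Fintype n]

theorem dotProduct_mulVec_self_eq_sum_sum (M : Matrix n n ℝ) (c : n → ℝ) :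
    c ⬝ᵥ (M *ᵥ c) = ∑ i, ∑ j, c i * c j * M i j := by
  simp only [dotProduct, mulVec, mul_sum]
  exact sum_congr rfl fun i _ => sum_congr rfl fun j _ => by ring

theorem PosSemidef.sum_sum_nonneg {M : Matrix n n ℝ} (hM : M.PosSemidef) (c : n → ℝ) :
    0 ≤ ∑ i, ∑ j, c i * c j * M i j := by
  simpa [dotProduct_mulVec_self_eq_sum_sum] using hM.dotProduct_mulVec_nonneg c

theorem PosSemidef.of_sum_sum_nonneg {M : Matrix n n ℝ} (hsymm : ∀ i j, M i j = M j i)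
    (h : ∀ c : n → ℝ, 0 ≤ ∑ i, ∑ j, c i * c j * M i j) : M.PosSemidef :=
  .of_dotProduct_mulVec_nonneg (IsHermitian.ext fun i j => hsymm j i) fun c => by
    simpa [dotProduct_mulVec_self_eq_sum_sum] using h c

theorem PosSemidef.map_pow {M : Matrix n n ℝ} (hM : M.PosSemidef) (k : ℕ) :
    (M.map (· ^ k)).PosSemidef := by
  induction k with
  | zero => simpa [vecMulVec, map, of] using posSemidef_vecMulVec_self_star (1 : n → ℝ)
  | succ k ih =>
    have : M.map (· ^ (k + 1)) = M.map (· ^ k) ⊙ M := by ext; simp [pow_succ]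
    exact this ▸ ih.hadamard hM

theorem PosSemidef.map_exp {M : Matrix n n ℝ} (hM : M.PosSemidef) :
    (M.map Real.exp).PosSemidef := by
  refine .of_sum_sum_nonneg (fun i j => by simp [← hM.isHermitian.apply i j]) fun c => ?_
  have hsum : HasSum (fun k : ℕ => (k.factorial : ℝ)⁻¹ * ∑ i, ∑ j, c i * c j * M i j ^ k)
      (∑ i, ∑ j, c i * c j * Real.exp (M i j)) := by
    simp only [mul_sum]
    refine hasSum_sum fun i _ => hasSum_sum fun j _ => ?_
    simpa [Real.exp_eq_exp_ℝ, div_eq_inv_mul, mul_left_comm] using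
      (NormedSpace.expSeries_div_hasSum_exp (M i j)).mul_left (c i * c j)
  simpa using hsum.nonneg fun k => mul_nonneg (by positivity) ((hM.map_pow k).sum_sum_nonneg c)

end Matrix

/-- Appending `x₀` with weight `-∑ c` turns the negative type inequality into the
nonnegativity of this kernel's quadratic form at `c`. -/
theorem posSemidef_of_negType {X : Type*} {ψ : X → X → ℝ}
    (hsymm : ∀ x y, ψ x y = ψ y x) (hdiag : ∀ x, ψ x x = 0)
    (hneg : ∀ (n : ℕ) (x : Fin n → X) (c : Fin n → ℝ), (∑ i, c i) = 0 →
      ∑ i, ∑ j, c i * c j * ψ (x i) (x j) ≤ 0)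
    (x₀ : X) {n : ℕ} (x : Fin n → X) :
    (Matrix.of fun i j => ψ (x i) x₀ + ψ (x j) x₀ - ψ (x i) (x j)).PosSemidef := by
  refine .of_sum_sum_nonneg (fun i j => by simp [hsymm (x i) (x j)]; ring) fun c => ?_
  have h := hneg (n + 1) (Fin.cons x₀ x) (Fin.cons (-∑ i, c i) c) (by simp [Fin.sum_cons])
  simp only [Fin.sum_univ_succ, Fin.cons_zero, Fin.cons_succ, hdiag, hsymm x₀,
    sum_add_distrib] at h
  have hrow : ∀ i, ∑ j, c i * c j * ψ (x j) x₀ = c i * ∑ j, c j * ψ (x j) x₀ := fun i => by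
    simp only [mul_sum, mul_assoc]
  have hcol : ∀ i, ∑ j, c i * c j * ψ (x i) x₀ = c i * ψ (x i) x₀ * ∑ j, c j := fun i => by
    simp only [mul_sum]; exact sum_congr rfl fun j _ => by ring
  have hl : ∑ i, -(∑ j, c j) * c i * ψ (x i) x₀ = -(∑ j, c j) * ∑ i, c i * ψ (x i) x₀ := by
    simp only [mul_sum, mul_assoc]
  have hr : ∑ i, c i * -(∑ j, c j) * ψ (x i) x₀ = -(∑ j, c j) * ∑ i, c i * ψ (x i) x₀ := by
    simp only [mul_sum]; exact sum_congr rfl fun i _ => by ring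
  rw [hl, hr] at h
  simp only [of_apply, mul_add, mul_sub, sum_add_distrib, sum_sub_distrib, hrow, hcol, ← sum_mul]
  linarith

/-- Schoenberg's theorem: if `ψ` is a symmetric kernel of negative type, then
`exp (-t * ψ)` is positive semidefinite for every `t ≥ 0`. -/
theorem schoenberg {X : Type*} (ψ : X → X → ℝ)
    (hsymm : ∀ x y, ψ x y = ψ y x) (hdiag : ∀ x, ψ x x = 0)
    (hneg : ∀ (n : ℕ) (x : Fin n → X) (c : Fin n → ℝ), (∑ i, c i) = 0 →
      ∑ i, ∑ j, c i * c j * ψ (x i) (x j) ≤ 0) :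
    ∀ t : ℝ, 0 ≤ t → ∀ (n : ℕ) (x : Fin n → X) (c : Fin n → ℝ),
      0 ≤ ∑ i, ∑ j, c i * c j * Real.exp (-t * ψ (x i) (x j)) := by
  intro t ht n x c
  cases n with
  | zero => simp
  | succ n =>
    have hexp := ((posSemidef_of_negType hsymm hdiag hneg (x 0) x).smul ht).map_exp
    calc 0 ≤ ∑ i, ∑ j, (c i * Real.exp (-t * ψ (x i) (x 0))) *
          (c j * Real.exp (-t * ψ (x j) (x 0))) *
          Real.exp (t * (ψ (x i) (x 0) + ψ (x j) (x 0) - ψ (x i) (x j))) :=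
        hexp.sum_sum_nonneg _
      _ = ∑ i, ∑ j, c i * c j * Real.exp (-t * ψ (x i) (x j)) := by
        refine sum_congr rfl fun i _ => sum_congr rfl fun j _ => ?_
        rw [mul_mul_mul_comm, mul_assoc, ← Real.exp_add, ← Real.exp_add]
        congr 2
        ring
end

section
/- For $w \in \mathbb{C}$ with $\frac{s}{2} \pm (w - \frac12)$ avoiding the nonpositive integers and $s > 1$, the infinite product $G_s(z) = \frac{s-1}{2}\prod_{k=1}^\infty\Bigl(1 - \frac{z}{4(\frac{s-3}{2}+k)(\frac{s-1}{2}+k)}\Bigr)$ evaluated at $z = -4w(1-w)$ equals $\frac{\Gamma^2(\frac{s+1}{2})}{\Gamma(\frac{s}{2}+(w-\frac12))\,\Gamma(\frac{s}{2}-(w-\frac12))}$. -/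
/-!
Put `p = (s - 1) / 2` and `x, y = s / 2 ± (w - 1 / 2)`. The `k`-th factor of `G_s(-4w(1 - w))` is
`(x + k)(y + k) / ((p + k)(p + 1 + k))`, and `x + y = p + (p + 1)`. For such balanced quotients the
powers `n ^ x n ^ y` and `n ^ p n ^ (p + 1)` in Gauss's sequences `GammaSeq` cancel, so the partial
products are quotients of `GammaSeq`s and the product equals `Γ(p) Γ(p + 1) / (Γ(x) Γ(y))`; finally
`Γ(p + 1) = p Γ(p)`.
-/

open Filter Finset Topology Asymptotics

/-- The entire function `G_s` defined by the stated infinite product. -/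
noncomputable def Gprod (s : ℝ) (z : ℂ) : ℂ :=
  ((s : ℂ) - 1) / 2 *
    ∏' k : ℕ, (1 - z / (4 * (((s : ℂ) - 3) / 2 + (k + 1)) * (((s : ℂ) - 1) / 2 + (k + 1))))

namespace Complex

lemma ne_neg_natCast_of_re_pos {z : ℂ} (hz : 0 < z.re) (m : ℕ) : z ≠ -m := by
  rintro rfl
  simp only [neg_re, natCast_re, Left.neg_pos_iff] at hz
  exact (Nat.cast_nonneg m).not_gt hz

theorem summable_inv_add_mul_add (c d : ℂ) : Summable fun k : ℕ => ((c + k) * (d + k))⁻¹ := by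
  have hk : Tendsto (norm ∘ fun k : ℕ => (k : ℂ)) atTop atTop := by
    simpa [Function.comp_def] using tendsto_natCast_atTop_atTop
  have hequiv : (fun k : ℕ => ((c + k) * (d + k))⁻¹) ~[atTop] fun k => ((k : ℂ) * k)⁻¹ :=
    ((IsEquivalent.refl.const_add_of_norm_tendsto_atTop hk).mul
      (IsEquivalent.refl.const_add_of_norm_tendsto_atTop hk)).inv
  rw [hequiv.summable_iff_nat]
  simpa [pow_two] using summable_ofReal.mpr (Real.summable_nat_pow_inv.mpr one_lt_two)

theorem GammaSeq_mul_div_GammaSeq_mul {a b c d : ℂ} (habcd : a + b = c + d) {n : ℕ}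
    (hn : n ≠ 0) :
    GammaSeq c n * GammaSeq d n / (GammaSeq a n * GammaSeq b n) =
      ∏ k ∈ range (n + 1), (a + k) * (b + k) / ((c + k) * (d + k)) := by
  have hn' : (n : ℂ) ≠ 0 := Nat.cast_ne_zero.mpr hn
  have hnum : (n : ℂ) ^ c * n.factorial * ((n : ℂ) ^ d * n.factorial)
      = (n : ℂ) ^ a * n.factorial * ((n : ℂ) ^ b * n.factorial) := by
    rw [mul_mul_mul_comm, ← cpow_add _ _ hn', ← habcd, cpow_add _ _ hn', mul_mul_mul_comm]
  have hne : (n : ℂ) ^ a * n.factorial * ((n : ℂ) ^ b * n.factorial) ≠ 0 := by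
    simp [cpow_eq_zero_iff, hn, Nat.factorial_ne_zero]
  rw [GammaSeq, GammaSeq, GammaSeq, GammaSeq, div_mul_div_comm, div_mul_div_comm,
    hnum, div_div_div_cancel_left' _ _ hne, prod_div_distrib, prod_mul_distrib,
    prod_mul_distrib]

theorem hasProd_Gamma_mul_div_Gamma_mul {a b c d : ℂ} (habcd : a + b = c + d)
    (ha : ∀ m : ℕ, a ≠ -m) (hb : ∀ m : ℕ, b ≠ -m) (hc : ∀ m : ℕ, c ≠ -m) (hd : ∀ m : ℕ, d ≠ -m) :
    HasProd (fun k : ℕ => (a + k) * (b + k) / ((c + k) * (d + k)))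
      (Gamma c * Gamma d / (Gamma a * Gamma b)) := by
  have hfactor : ∀ k : ℕ, (a + k) * (b + k) / ((c + k) * (d + k))
      = 1 + (a * b - c * d) * ((c + k) * (d + k))⁻¹ := fun k => by
    have hck : c + k ≠ 0 := fun h => hc k (eq_neg_of_add_eq_zero_left h)
    have hdk : d + k ≠ 0 := fun h => hd k (eq_neg_of_add_eq_zero_left h)
    field_simp
    linear_combination (k : ℂ) * habcd
  have hmult : Multipliable fun k : ℕ => (a + k) * (b + k) / ((c + k) * (d + k)) := by
    simpa only [hfactor] using
      Complex.multipliable_one_add_of_summable ((summable_inv_add_mul_add c d).mul_left _)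
  rw [hmult.hasProd_iff_tendsto_nat, ← tendsto_add_atTop_iff_nat 1]
  refine Tendsto.congr' ?_ ((((GammaSeq_tendsto_Gamma c).mul (GammaSeq_tendsto_Gamma d)).div
    ((GammaSeq_tendsto_Gamma a).mul (GammaSeq_tendsto_Gamma b))
    (mul_ne_zero (Gamma_ne_zero ha) (Gamma_ne_zero hb))))
  filter_upwards [eventually_ne_atTop 0] with n hn
  exact GammaSeq_mul_div_GammaSeq_mul habcd hn

end Complex

open Complex

theorem Gprod_neg_four_mul_mul_one_sub (s : ℝ) (hs : 1 < s) (w : ℂ) :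
    Gprod s (-4 * w * (1 - w)) = ((s : ℂ) - 1) / 2 * ∏' k : ℕ,
      ((s : ℂ) / 2 + (w - 1 / 2) + k) * ((s : ℂ) / 2 - (w - 1 / 2) + k) /
        ((((s : ℂ) - 1) / 2 + k) * (((s : ℂ) - 1) / 2 + 1 + k)) := by
  refine congrArg _ (tprod_congr fun k => ?_)
  set P : ℂ := ((s : ℂ) - 1) / 2 + k
  have hP : 0 < P.re := by simp [P]; positivity
  have hP0 : P ≠ 0 := ne_of_apply_ne re hP.ne'
  have hP1 : P + 1 ≠ 0 := ne_of_apply_ne re (by simp; linarith)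
  rw [show ((s : ℂ) - 3) / 2 + (k + 1) = P by ring, show ((s : ℂ) - 1) / 2 + (k + 1) = P + 1 by ring,
    show (s : ℂ) / 2 + (w - 1 / 2) + k = P + w by ring,
    show (s : ℂ) / 2 - (w - 1 / 2) + k = P + 1 - w by ring,
    show ((s : ℂ) - 1) / 2 + 1 + k = P + 1 by ring]
  field_simp
  ring

theorem Gprod_eval (s : ℝ) (hs : 1 < s) (w : ℂ)
    (h1 : ∀ k : ℕ, (s : ℂ) / 2 + (w - 1 / 2) ≠ -(k : ℂ))
    (h2 : ∀ k : ℕ, (s : ℂ) / 2 - (w - 1 / 2) ≠ -(k : ℂ)) :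
    Gprod s (-4 * w * (1 - w))
      = (Complex.Gamma (((s : ℂ) + 1) / 2)) ^ 2 /
        (Complex.Gamma ((s : ℂ) / 2 + (w - 1 / 2)) *
          Complex.Gamma ((s : ℂ) / 2 - (w - 1 / 2))) := by
  set p : ℂ := ((s : ℂ) - 1) / 2
  have hp : 0 < p.re := by simp [p]; linarith
  have hprod := hasProd_Gamma_mul_div_Gamma_mul (c := p) (d := p + 1) (by ring) h1 h2
    (ne_neg_natCast_of_re_pos hp) (ne_neg_natCast_of_re_pos (by simp; linarith))
  rw [Gprod_neg_four_mul_mul_one_sub s hs w, hprod.tprod_eq, show ((s : ℂ) + 1) / 2 = p + 1 by ring,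
    Gamma_add_one p (ne_of_apply_ne re hp.ne')]
  ring
end
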